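/- arXiv:2502.21136 — 2 statements merged into one kernel-verified Lean document; each statement's English description precedes it below -/
import Mathlib

section
/- If z ∈ ℤ[i] is nonzero, ℓ∞(z) ≤ wₙ - 2^{v₂(z)+1}, and ℓ₁(z) ≤ w_{n+1} - 3·2^{v₂(z)}, then φ(z) ≤ n. -/
open GaussianInt

noncomputable section

/-- The sequence w: w_{2k} = 3·2^k, w_{2k+1} = 4·2^k. -/
def w (n : ℕ) : ℤ := if n % 2 = 0 then 3 * 2 ^ (n / 2) else 4 * 2 ^ (n / 2)

/-- 2-adic valuation of gcd(Re z, Im z). -/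
def v2 (z : GaussianInt) : ℕ := padicValNat 2 (Int.gcd z.re z.im)

/-- ℓ₁ norm. -/
def l1 (z : GaussianInt) : ℤ := |z.re| + |z.im|

/-- ℓ∞ norm. -/
def linf (z : GaussianInt) : ℤ := max |z.re| |z.im|

/-- m(z) = min(|Re z|, |Im z|). -/
def mm (z : GaussianInt) : ℤ := min |z.re| |z.im|

/-- The algebraic norm. -/
def Nm (z : GaussianInt) : ℤ := z.re ^ 2 + z.im ^ 2

/-- Graves' formula for the minimal Euclidean function φ on ℤ[i]. -/
def phi (z : GaussianInt) : ℕ :=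
  let j := v2 z
  let n := sInf {n : ℕ | |z.re| ≤ 2 ^ j * (w n - 2) ∧ |z.im| ≤ 2 ^ j * (w n - 2)}
  if l1 z ≤ 2 ^ j * (w (n + 1) - 3) then n + 2 * j else n + 2 * j + 1

/-- Nearest integer, rounding halves down. -/
def nint (x : ℚ) : ℤ := if x - ⌊x⌋ ≤ 1 / 2 then ⌊x⌋ else ⌈x⌉

/-- Gauss quotient: coordinatewise nearest-integer rounding of a·conj(b)/Nm(b). -/
def gq (a b : GaussianInt) : GaussianInt :=
  ⟨nint (((a.re * b.re + a.im * b.im : ℤ) : ℚ) / ((b.re ^ 2 + b.im ^ 2 : ℤ) : ℚ)),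
   nint (((a.im * b.re - a.re * b.im : ℤ) : ℚ) / ((b.re ^ 2 + b.im ^ 2 : ℤ) : ℚ))⟩

/-- Gauss remainder. -/
def gr (a b : GaussianInt) : GaussianInt := a - gq a b * b

/-- The imaginary unit in ℤ[i]. -/
def Ii : GaussianInt := ⟨0, 1⟩

/-- The canonical unit u_z. -/
def uz (z : GaussianInt) : GaussianInt :=
  if |z.re| > |z.im| then (if 0 < z.re then 1 else -1)
  else if |z.im| > |z.re| then (if 0 < z.im then -Ii else Ii)
  else if 0 < z.re then (if 0 < z.im then 1 else Ii)
  else (if 0 < z.im then -Ii else -1)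

/-- s(z) = sgn(Im(u_z·z)). -/
def sfun (z : GaussianInt) : ℤ := Int.sign ((uz z * z).im)

/-!
Scaling by `2^j` shifts the sequence `w` by `2j`: `2^j * w m = w (m + 2j)`. With `j = v₂(z)`,
the bound `3·2^j ≤ 2^j + ℓ∞(z) ≤ w n` forces `2j ≤ n`, so `n = m + 2j`, and the hypotheses
become `|x|, |y| ≤ 2^j (w m - 2)` and `|x| + |y| ≤ 2^j (w (m+1) - 3)`. Thus `m` is admissible
in the infimum defining `φ`, whence `φ(z) ≤ m + 2j = n`.
-/

lemma w_add_two (k : ℕ) : w (k + 2) = 2 * w k := by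
  unfold w
  rw [show (k + 2) % 2 = k % 2 by omega, show (k + 2) / 2 = k / 2 + 1 by omega]
  split <;> ring

lemma two_pow_mul_w (j k : ℕ) : 2 ^ j * w k = w (k + 2 * j) := by
  induction j with
  | zero => simp
  | succ j ih => rw [show k + 2 * (j + 1) = k + 2 * j + 2 by ring, w_add_two, ← ih]; ring

lemma w_le_four_mul_two_pow (n : ℕ) : w n ≤ 4 * 2 ^ (n / 2) := by
  have : (0 : ℤ) ≤ 2 ^ (n / 2) := by positivity
  unfold w; split <;> linarith

lemma two_mul_le_of_three_mul_two_pow_le_w {j n : ℕ} (h : 3 * 2 ^ j ≤ w n) : 2 * j ≤ n := by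
  by_contra! hn
  have hj : (2 : ℤ) ^ j = 2 * 2 ^ (j - 1) := by rw [← pow_succ']; congr 1; omega
  have hmono : (2 : ℤ) ^ (n / 2) ≤ 2 ^ (j - 1) := pow_le_pow_right₀ (by norm_num) (by omega)
  have := w_le_four_mul_two_pow n
  nlinarith [pow_pos (by norm_num : (0 : ℤ) < 2) (j - 1)]

lemma two_pow_v2_le_linf {z : GaussianInt} (hz : z ≠ 0) : 2 ^ v2 z ≤ linf z := by
  have hg0 : Int.gcd z.re z.im ≠ 0 := by
    intro hg
    obtain ⟨hre, him⟩ := Int.gcd_eq_zero_iff.mp hg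
    exact hz (Zsqrtd.ext hre him)
  have hpow : 2 ^ v2 z ≤ Int.gcd z.re z.im :=
    Nat.le_of_dvd (Nat.pos_of_ne_zero hg0) pow_padicValNat_dvd
  have hgcd : (Int.gcd z.re z.im : ℤ) ≤ linf z := by
    rcases not_and_or.mp (Int.gcd_eq_zero_iff.not.mp hg0) with h | h
    · exact (Int.le_of_dvd (abs_pos.mpr h) ((dvd_abs _ _).mpr (Int.gcd_dvd_left _ _))).trans
        (le_max_left _ _)
    · exact (Int.le_of_dvd (abs_pos.mpr h) ((dvd_abs _ _).mpr (Int.gcd_dvd_right _ _))).trans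
        (le_max_right _ _)
  exact le_trans (by exact_mod_cast hpow) hgcd

lemma phi_le_of_admissible {z : GaussianInt} {m : ℕ}
    (hre : |z.re| ≤ 2 ^ v2 z * (w m - 2)) (him : |z.im| ≤ 2 ^ v2 z * (w m - 2))
    (hl1 : l1 z ≤ 2 ^ v2 z * (w (m + 1) - 3)) :
    phi z ≤ m + 2 * v2 z := by
  set S := {k : ℕ | |z.re| ≤ 2 ^ v2 z * (w k - 2) ∧ |z.im| ≤ 2 ^ v2 z * (w k - 2)}
  have hle : sInf S ≤ m := Nat.sInf_le ⟨hre, him⟩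
  change (if l1 z ≤ 2 ^ v2 z * (w (sInf S + 1) - 3) then sInf S + 2 * v2 z
    else sInf S + 2 * v2 z + 1) ≤ m + 2 * v2 z
  rcases hle.lt_or_eq with hlt | heq
  · split <;> omega
  · rw [heq, if_pos hl1]

theorem stmt5 (z : GaussianInt) (hz : z ≠ 0) (n : ℕ)
    (h1 : linf z ≤ w n - 2 ^ (v2 z + 1))
    (h2 : l1 z ≤ w (n + 1) - 3 * 2 ^ (v2 z)) :
    phi z ≤ n := by
  set j := v2 z
  rw [pow_succ] at h1
  have hjn : 2 * j ≤ n :=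
    two_mul_le_of_three_mul_two_pow_le_w (by linarith [two_pow_v2_le_linf hz])
  obtain ⟨m, rfl⟩ : ∃ m, n = m + 2 * j := ⟨n - 2 * j, by omega⟩
  have hw := two_pow_mul_w j m
  have hw' : 2 ^ j * w (m + 1) = w (m + 2 * j + 1) := by
    rw [two_pow_mul_w, Nat.add_right_comm]
  have hre : |z.re| ≤ linf z := le_max_left _ _
  have him : |z.im| ≤ linf z := le_max_right _ _
  exact phi_le_of_admissible (by linarith) (by linarith) (by linarith)
end
end

section
/- Suppose r is the nonzero Gauss remainder of nonzero a, b ∈ ℤ[i], φ(r) ≥ φ(b) = n, and 2^{v₂(r)} does not divide w_{n-1}. Then min(|Re r|, |Im r|) = 0 and φ(r - (u_b/u_r)·b) < φ(b), where u_b, u_r are the canonical units of b and r. -/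
open GaussianInt

noncomputable section

/-!
Put `J = 2 ^ v₂(r)`. Rounding bounds both coordinates of `r·b̄` by `Nm b / 2` in absolute value, so
`2 Nm r ≤ Nm b`; Graves' formula gives `Nm b < 3·2^(n+2)`, and `J² ≤ Nm r`. Hence
`J² < 3·2^(n+1)`, and `2 ^ v₂(r) ∤ w (n - 1)` then forces `n + 1 = 2 v₂(r)`. Now `Nm r < 3J²`
with `J` dividing both coordinates leaves `r ∈ {±J, ±iJ, J(±1 ± i)}`; the diagonal case would
give `2J·ℓ₁(b) ≤ Nm b ≤ ℓ∞(b)·ℓ₁(b)`, contradicting `ℓ∞(b) < 2J`. So `u_r r = J`, and up to the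
unit `ū_r` the new remainder is `J - u_b b`. Its coordinates have absolute values
`(ℓ∞(b) - J, m(b))` (the rounding bound also gives `J ≤ ℓ∞(b)`), and these satisfy Graves' bounds
of index `n - 1` at the same valuation `v₂(b)`.
-/

lemma w_even (t : ℕ) : w (2 * t) = 3 * 2 ^ t := by
  simp [w]

lemma w_odd (t : ℕ) : w (2 * t + 1) = 4 * 2 ^ t := by
  simp [w, Nat.add_mod, Nat.add_div]

lemma w_mul_w_succ (m : ℕ) : w m * w (m + 1) = 12 * 2 ^ m := by
  obtain ⟨t, rfl | rfl⟩ := Nat.even_or_odd' m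
  · rw [w_even, w_odd, pow_mul']; ring
  · rw [w_odd, show 2 * t + 1 + 1 = 2 * (t + 1) by ring, w_even, pow_succ, pow_succ, pow_mul']
    ring

lemma w_le_w_succ (m : ℕ) : w m ≤ w (m + 1) := by
  obtain ⟨t, rfl | rfl⟩ := Nat.even_or_odd' m
  · rw [w_even, w_odd]; linarith [pow_pos (two_pos : (0 : ℤ) < 2) t]
  · rw [w_odd, show 2 * t + 1 + 1 = 2 * (t + 1) by ring, w_even, pow_succ]
    linarith [pow_pos (two_pos : (0 : ℤ) < 2) t]

lemma w_le_two_pow (m : ℕ) : w m ≤ 2 ^ (m / 2 + 2) := by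
  obtain ⟨t, rfl | rfl⟩ := Nat.even_or_odd' m
  · rw [w_even, show 2 * t / 2 = t by omega, pow_add]; linarith [pow_pos (two_pos : (0 : ℤ) < 2) t]
  · rw [w_odd, show (2 * t + 1) / 2 = t by omega, pow_add]; linarith

lemma three_le_w (m : ℕ) : 3 ≤ w m := by
  obtain ⟨t, rfl | rfl⟩ := Nat.even_or_odd' m
  · rw [w_even]; linarith [one_le_pow₀ (M₀ := ℤ) (a := 2) one_le_two (n := t)]
  · rw [w_odd]; linarith [one_le_pow₀ (M₀ := ℤ) (a := 2) one_le_two (n := t)]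

lemma add_two_le_w_two_mul (m : ℕ) : (m : ℤ) + 2 ≤ w (2 * m) := by
  rw [w_even]
  have : (m : ℤ) < 2 ^ m := by exact_mod_cast Nat.lt_two_pow_self
  linarith

lemma succ_eq_two_mul_of_not_dvd_w {n j : ℕ} (hn : 1 ≤ n) (hj : 2 * j ≤ n + 2)
    (h : ¬ (2 : ℤ) ^ j ∣ w (n - 1)) : n + 1 = 2 * j := by
  obtain ⟨σ, rfl | rfl⟩ := Nat.even_or_odd' n
  · obtain ⟨k, rfl⟩ : ∃ k, σ = k + 1 := ⟨σ - 1, by omega⟩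
    rw [show 2 * (k + 1) - 1 = 2 * k + 1 by omega, w_odd,
      show (4 : ℤ) * 2 ^ k = 2 ^ (k + 2) by ring] at h
    exact absurd (pow_dvd_pow 2 (by omega)) h
  · rw [show 2 * σ + 1 - 1 = 2 * σ by omega, w_even] at h
    have : σ < j := by
      by_contra! hle
      exact h (Dvd.dvd.mul_left (pow_dvd_pow 2 hle) 3)
    omega

lemma ne_zero_iff_re_ne_zero_or_im_ne_zero {z : GaussianInt} : z ≠ 0 ↔ z.re ≠ 0 ∨ z.im ≠ 0 := by
  rw [Ne, Zsqrtd.ext_iff]; simp only [Zsqrtd.re_zero, Zsqrtd.im_zero]; tauto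

lemma Nm_eq_norm (z : GaussianInt) : Nm z = z.norm := by
  simp only [Nm, Zsqrtd.norm]; ring

lemma Nm_mul (x y : GaussianInt) : Nm (x * y) = Nm x * Nm y := by
  simp only [Nm_eq_norm, Zsqrtd.norm_mul]

lemma Nm_star (z : GaussianInt) : Nm (star z) = Nm z := by
  simp [Nm]

lemma Nm_pos {z : GaussianInt} (hz : z ≠ 0) : 0 < Nm z := by
  rcases ne_zero_iff_re_ne_zero_or_im_ne_zero.mp hz with h | h <;> unfold Nm <;> positivity

lemma Nm_le_linf_mul_l1 (z : GaussianInt) : Nm z ≤ linf z * l1 z := by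
  have hre : z.re ^ 2 ≤ linf z * |z.re| := by
    rw [← sq_abs, sq]; exact mul_le_mul_of_nonneg_right (le_max_left _ _) (abs_nonneg _)
  have him : z.im ^ 2 ≤ linf z * |z.im| := by
    rw [← sq_abs, sq]; exact mul_le_mul_of_nonneg_right (le_max_right _ _) (abs_nonneg _)
  unfold Nm l1; linarith

lemma l1_le_two_mul_linf (z : GaussianInt) : l1 z ≤ 2 * linf z := by
  unfold l1 linf; linarith [le_max_left |z.re| |z.im|, le_max_right |z.re| |z.im|]

lemma l1_pos {z : GaussianInt} (hz : z ≠ 0) : 0 < l1 z := by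
  rcases ne_zero_iff_re_ne_zero_or_im_ne_zero.mp hz with h | h <;> unfold l1 <;>
    positivity

lemma pow_dvd_re_and_im_iff_le_v2 {z : GaussianInt} (hz : z ≠ 0) (k : ℕ) :
    (2 : ℤ) ^ k ∣ z.re ∧ (2 : ℤ) ^ k ∣ z.im ↔ k ≤ v2 z := by
  have : Fact (Nat.Prime 2) := ⟨Nat.prime_two⟩
  have hg : Int.gcd z.re z.im ≠ 0 := by
    rw [Ne, Int.gcd_eq_zero_iff, not_and_or]
    exact ne_zero_iff_re_ne_zero_or_im_ne_zero.mp hz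
  rw [v2, ← padicValNat_dvd_iff_le hg, ← Int.natCast_dvd_natCast, Nat.cast_pow, Nat.cast_ofNat]
  exact ⟨fun h => Int.dvd_coe_gcd h.1 h.2,
    fun h => ⟨h.trans (Int.gcd_dvd_left _ _), h.trans (Int.gcd_dvd_right _ _)⟩⟩

lemma sq_two_pow_v2_le_Nm {z : GaussianInt} (hz : z ≠ 0) : ((2 : ℤ) ^ v2 z) ^ 2 ≤ Nm z := by
  obtain ⟨hre, him⟩ := (pow_dvd_re_and_im_iff_le_v2 hz _).mpr le_rfl
  have key : ∀ c : ℤ, (2 : ℤ) ^ v2 z ∣ c → c ≠ 0 → ((2 : ℤ) ^ v2 z) ^ 2 ≤ c ^ 2 := fun c hc h0 =>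
    (sq_le_sq₀ (by positivity) (abs_nonneg c)).mpr (Int.le_of_dvd (abs_pos.mpr h0)
      ((dvd_abs _ _).mpr hc)) |>.trans_eq (sq_abs c)
  unfold Nm
  rcases ne_zero_iff_re_ne_zero_or_im_ne_zero.mp hz with h | h
  · nlinarith [key _ hre h, sq_nonneg z.im]
  · nlinarith [key _ him h, sq_nonneg z.re]

lemma abs_sub_nint_le (x : ℚ) : |x - nint x| ≤ 1 / 2 := by
  unfold nint
  split_ifs with h
  · rw [abs_le]; exact ⟨by linarith [Int.floor_le x], h⟩
  · have : (⌈x⌉ : ℚ) ≤ ⌊x⌋ + 1 := by exact_mod_cast Int.ceil_le_floor_add_one x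
    rw [abs_le]; constructor <;> linarith [Int.le_ceil x]

lemma two_mul_abs_sub_nint_div_mul_le (A N : ℤ) (hN : 0 < N) :
    2 * |A - nint ((A : ℚ) / N) * N| ≤ N := by
  have hNQ : (0 : ℚ) < N := by exact_mod_cast hN
  have h : (2 * |A - nint ((A : ℚ) / N) * N| : ℚ) ≤ N := by
    push_cast
    rw [show (A : ℚ) - nint ((A : ℚ) / N) * N = ((A : ℚ) / N - nint ((A : ℚ) / N)) * N by
      field_simp, abs_mul, abs_of_pos hNQ]
    nlinarith [abs_sub_nint_le ((A : ℚ) / N)]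
  exact_mod_cast h

lemma two_mul_linf_gr_mul_star_le (a : GaussianInt) {b : GaussianInt} (hb : b ≠ 0) :
    2 * linf (gr a b * star b) ≤ Nm b := by
  have hre : (gr a b * star b).re = (a.re * b.re + a.im * b.im) - (gq a b).re * Nm b := by
    simp only [gr, gq, Nm, Zsqrtd.re_mul, Zsqrtd.im_mul, Zsqrtd.re_sub, Zsqrtd.im_sub,
      Zsqrtd.re_star, Zsqrtd.im_star]; ring
  have him : (gr a b * star b).im = (a.im * b.re - a.re * b.im) - (gq a b).im * Nm b := by
    simp only [gr, gq, Nm, Zsqrtd.re_mul, Zsqrtd.im_mul, Zsqrtd.re_sub, Zsqrtd.im_sub,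
      Zsqrtd.re_star, Zsqrtd.im_star]; ring
  rw [linf, mul_max_of_nonneg _ _ two_pos.le, hre, him]
  exact max_le (two_mul_abs_sub_nint_div_mul_le _ _ (Nm_pos hb))
    (two_mul_abs_sub_nint_div_mul_le _ _ (Nm_pos hb))

lemma two_mul_Nm_le_of_two_mul_linf_le {r b : GaussianInt} (hb : b ≠ 0)
    (h : 2 * linf (r * star b) ≤ Nm b) : 2 * Nm r ≤ Nm b := by
  have hp : 2 * Nm (r * star b) ≤ Nm b ^ 2 := by
    have := Nm_le_linf_mul_l1 (r * star b)
    have := l1_le_two_mul_linf (r * star b)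
    have : 0 ≤ linf (r * star b) := le_max_of_le_left (abs_nonneg _)
    nlinarith
  rw [Nm_mul, Nm_star] at hp
  nlinarith [Nm_pos hb]

/-- The index `n` of Graves' formula. -/
def gravesIndex (z : GaussianInt) : ℕ :=
  sInf {n : ℕ | |z.re| ≤ 2 ^ (v2 z) * (w n - 2) ∧ |z.im| ≤ 2 ^ (v2 z) * (w n - 2)}

lemma phi_def (z : GaussianInt) :
    phi z = if l1 z ≤ 2 ^ v2 z * (w (gravesIndex z + 1) - 3) then gravesIndex z + 2 * v2 z
      else gravesIndex z + 2 * v2 z + 1 := rfl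

lemma linf_le_iff {z : GaussianInt} {c : ℤ} : linf z ≤ c ↔ |z.re| ≤ c ∧ |z.im| ≤ c :=
  max_le_iff

lemma linf_le_gravesIndex (z : GaussianInt) :
    linf z ≤ 2 ^ v2 z * (w (gravesIndex z) - 2) := by
  refine linf_le_iff.mpr (Nat.sInf_mem (s := {n : ℕ | |z.re| ≤ 2 ^ (v2 z) * (w n - 2) ∧
    |z.im| ≤ 2 ^ (v2 z) * (w n - 2)}) ⟨2 * (linf z).toNat, linf_le_iff.mp ?_⟩)
  have hk : linf z ≤ (linf z).toNat := Int.self_le_toNat _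
  have := add_two_le_w_two_mul (linf z).toNat
  have := one_le_pow₀ (M₀ := ℤ) (a := 2) one_le_two (n := v2 z)
  nlinarith

lemma lt_linf_of_lt_gravesIndex {z : GaussianInt} {s : ℕ} (hs : s < gravesIndex z) :
    2 ^ v2 z * (w s - 2) < linf z :=
  not_le.mp fun h => Nat.notMem_of_lt_sInf hs (linf_le_iff.mp h)

lemma phi_eq_gravesIndex_or (z : GaussianInt) :
    (phi z = gravesIndex z + 2 * v2 z ∧ l1 z ≤ 2 ^ v2 z * (w (gravesIndex z + 1) - 3)) ∨
      phi z = gravesIndex z + 2 * v2 z + 1 := by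
  rw [phi_def]
  split_ifs with h
  exacts [Or.inl ⟨rfl, h⟩, Or.inr rfl]

lemma phi_le_of_le (z : GaussianInt) (s : ℕ) (hlinf : linf z ≤ 2 ^ v2 z * (w s - 2))
    (hl1 : l1 z ≤ 2 ^ v2 z * (w (s + 1) - 3)) : phi z ≤ s + 2 * v2 z := by
  have hs : gravesIndex z ≤ s := Nat.sInf_le (linf_le_iff.mp hlinf)
  rcases phi_eq_gravesIndex_or z with ⟨h, -⟩ | h
  · omega
  · rcases hs.lt_or_eq with hs | rfl
    · omega
    · rw [phi_def, if_pos hl1]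

lemma Nm_lt_of_phi (z : GaussianInt) : Nm z < 3 * 2 ^ (phi z + 2) := by
  set m := gravesIndex z
  set B : ℤ := 2 ^ v2 z
  have hB : 0 < B := by positivity
  have hlinf := linf_le_gravesIndex z
  have hw := w_mul_w_succ m
  have hw3 := three_le_w m
  have hww := w_le_w_succ m
  have hNm := Nm_le_linf_mul_l1 z
  have hl1 := l1_le_two_mul_linf z
  have hlinf0 : 0 ≤ linf z := le_max_of_le_left (abs_nonneg _)
  have hpow : ∀ e : ℕ, (2 : ℤ) ^ (m + 2 * v2 z + e) = 2 ^ m * B ^ 2 * 2 ^ e := fun e => by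
    rw [pow_add, pow_add, pow_mul']
  rcases phi_eq_gravesIndex_or z with ⟨h, hl1'⟩ | h <;> rw [h]
  · rw [hpow]
    have : linf z * l1 z ≤ (B * (w m - 2)) * (B * (w (m + 1) - 3)) :=
      mul_le_mul hlinf hl1' (add_nonneg (abs_nonneg _) (abs_nonneg _)) (by nlinarith)
    nlinarith
  · rw [show m + 2 * v2 z + 1 + 2 = m + 2 * v2 z + 3 by ring, hpow]
    have h1 : linf z * linf z ≤ (B * (w m - 2)) * (B * (w m - 2)) :=
      mul_le_mul hlinf hlinf hlinf0 (by nlinarith)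
    have h2 : (B * (w m - 2)) * (B * (w m - 2)) < B ^ 2 * (w m * w (m + 1)) := by
      have : (w m - 2) * (w m - 2) < w m * w (m + 1) := by nlinarith
      nlinarith [pow_pos hB 2]
    nlinarith

lemma linf_lt_of_phi_lt {z : GaussianInt} {k : ℕ} (h : phi z < 2 * k) :
    linf z < 2 ^ (k + 1) := by
  have hm : gravesIndex z / 2 + v2 z + 2 ≤ k + 1 := by
    rcases phi_eq_gravesIndex_or z with ⟨h', -⟩ | h' <;> omega
  calc linf z ≤ 2 ^ v2 z * (w (gravesIndex z) - 2) := linf_le_gravesIndex z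
    _ < 2 ^ v2 z * 2 ^ (gravesIndex z / 2 + 2) := by
      gcongr; linarith [w_le_two_pow (gravesIndex z)]
    _ ≤ 2 ^ (k + 1) := by
      rw [← pow_add]; exact pow_le_pow_right₀ one_le_two (by omega)

lemma abs_re_im_mul_of_isUnit {u : GaussianInt} (hu : IsUnit u) (z : GaussianInt) :
    (|(u * z).re| = |z.re| ∧ |(u * z).im| = |z.im|) ∨
      (|(u * z).re| = |z.im| ∧ |(u * z).im| = |z.re|) := by
  have hn := (Zsqrtd.norm_eq_one_iff' (by norm_num) u).mpr hu
  simp only [Zsqrtd.norm] at hn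
  have hu' : (u.re = 0 ∧ |u.im| = 1) ∨ (|u.re| = 1 ∧ u.im = 0) := by
    obtain ⟨a, b⟩ := u
    dsimp only at hn ⊢
    obtain ⟨ha1, ha2⟩ : -1 ≤ a ∧ a ≤ 1 :=
      abs_le.mp (abs_le_one_iff_mul_self_le_one.mpr (by nlinarith [mul_self_nonneg b]))
    obtain ⟨hb1, hb2⟩ : -1 ≤ b ∧ b ≤ 1 :=
      abs_le.mp (abs_le_one_iff_mul_self_le_one.mpr (by nlinarith [mul_self_nonneg a]))
    interval_cases a <;> interval_cases b <;> simp_all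
  simp only [Zsqrtd.re_mul, Zsqrtd.im_mul]
  rcases hu' with ⟨h0, h1⟩ | ⟨h1, h0⟩
  · right; simp [h0, abs_mul, h1]
  · left; simp [h0, abs_mul, h1]

lemma v2_eq_of_abs {z z' : GaussianInt}
    (h : (|z'.re| = |z.re| ∧ |z'.im| = |z.im|) ∨ (|z'.re| = |z.im| ∧ |z'.im| = |z.re|)) :
    v2 z' = v2 z := by
  have natAbs_eq : ∀ {a b : ℤ}, |a| = |b| → a.natAbs = b.natAbs := fun h => by
    rw [← Int.natAbs_abs, h, Int.natAbs_abs]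
  simp only [v2, Int.gcd_def]
  rcases h with ⟨h1, h2⟩ | ⟨h1, h2⟩
  · rw [natAbs_eq h1, natAbs_eq h2]
  · rw [natAbs_eq h1, natAbs_eq h2, Nat.gcd_comm]

lemma phi_eq_of_abs {z z' : GaussianInt}
    (h : (|z'.re| = |z.re| ∧ |z'.im| = |z.im|) ∨ (|z'.re| = |z.im| ∧ |z'.im| = |z.re|)) :
    phi z' = phi z := by
  have hv := v2_eq_of_abs h
  rcases h with ⟨h1, h2⟩ | ⟨h1, h2⟩
  · simp only [phi, l1, hv, h1, h2]; rfl
  · simp only [phi, l1, hv, h1, h2, add_comm |z.im|, and_comm]; rfl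

lemma phi_mul_of_isUnit {u : GaussianInt} (hu : IsUnit u) (z : GaussianInt) :
    phi (u * z) = phi z :=
  phi_eq_of_abs (abs_re_im_mul_of_isUnit hu z)

lemma star_mul_self_of_isUnit {u : GaussianInt} (hu : IsUnit u) : star u * u = 1 := by
  rw [mul_comm, ← Zsqrtd.norm_eq_mul_conj, (Zsqrtd.norm_eq_one_iff' (by norm_num) u).mpr hu,
    Int.cast_one]

lemma isUnit_uz (z : GaussianInt) : IsUnit (uz z) := by
  have hI : IsUnit Ii := IsUnit.of_mul_eq_one (-Ii) (by decide)
  unfold uz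
  split_ifs <;> first | exact isUnit_one | exact isUnit_one.neg | exact hI | exact hI.neg

lemma uz_mul_self_re_and_abs_im (z : GaussianInt) :
    (uz z * z).re = linf z ∧ |(uz z * z).im| = mm z := by
  have hre : Ii.re = 0 := rfl
  have him : Ii.im = 1 := rfl
  unfold uz linf mm
  split_ifs <;>
  · constructor <;>
    · simp only [Zsqrtd.re_mul, Zsqrtd.im_mul, Zsqrtd.re_neg, Zsqrtd.im_neg, hre, him,
        Zsqrtd.re_one, Zsqrtd.im_one]
      simp only [Int.abs_eq_natAbs] at *
      omega

lemma uz_mul_self_of_mm_eq_zero {z : GaussianInt} (h : mm z = 0) :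
    uz z * z = (linf z : GaussianInt) := by
  obtain ⟨hre, him⟩ := uz_mul_self_re_and_abs_im z
  ext
  · rw [hre, Zsqrtd.re_intCast]
  · rw [Zsqrtd.im_intCast, ← abs_eq_zero, him, h]

lemma sub_uz_mul_eq_star_uz_mul {r : GaussianInt} (hr : mm r = 0) (b : GaussianInt) :
    r - uz b * star (uz r) * b = star (uz r) * ((linf r : GaussianInt) - uz b * b) := by
  rw [mul_sub, ← uz_mul_self_of_mm_eq_zero hr, ← mul_assoc,
    star_mul_self_of_isUnit (isUnit_uz r), one_mul]
  ring

lemma linf_mul_star_of_mm_eq_zero {r : GaussianInt} (h : mm r = 0) (b : GaussianInt) :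
    linf (r * star b) = linf r * linf b := by
  simp only [linf, Zsqrtd.re_mul, Zsqrtd.im_mul, Zsqrtd.re_star, Zsqrtd.im_star]
  rcases min_choice |r.re| |r.im| with h' | h' <;> rw [← mm, h, eq_comm, abs_eq_zero] at h'
  · simp [h', abs_mul, mul_max_of_nonneg _ _ (abs_nonneg r.im), max_comm]
  · simp [h', abs_mul, mul_max_of_nonneg _ _ (abs_nonneg r.re)]

lemma max_abs_add_abs_sub (a c : ℤ) : max |a + c| |a - c| = |a| + |c| := by
  simp only [Int.abs_eq_natAbs]; omega

lemma linf_mul_star_of_abs_re_eq_abs_im {r : GaussianInt} (h : |r.re| = |r.im|)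
    (b : GaussianInt) : linf (r * star b) = linf r * l1 b := by
  simp only [linf, l1, Zsqrtd.re_mul, Zsqrtd.im_mul, Zsqrtd.re_star, Zsqrtd.im_star, ← h,
    max_self, ← max_abs_add_abs_sub b.re b.im, mul_max_of_nonneg _ _ (abs_nonneg r.re),
    ← abs_mul]
  rcases abs_eq_abs.mp h with h' | h'
  · rw [← h']; congr 1 <;> ring_nf
  · rw [show r.im = -r.re by linarith, max_comm]
    congr 1
    · exact abs_eq_abs.mpr (Or.inr (by ring))
    · exact abs_eq_abs.mpr (Or.inl (by ring))

lemma succ_eq_two_mul_v2_of_two_mul_Nm_lt {r : GaussianInt} {n : ℕ} (hr : r ≠ 0)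
    (hNm : 2 * Nm r < 3 * 2 ^ (n + 2)) (hn : 1 ≤ n) (h : ¬ (2 : ℤ) ^ v2 r ∣ w (n - 1)) :
    n + 1 = 2 * v2 r := by
  refine succ_eq_two_mul_of_not_dvd_w hn ?_ h
  have : (2 : ℤ) ^ (2 * v2 r + 1) < 2 ^ (n + 2 + 2) :=
    calc (2 : ℤ) ^ (2 * v2 r + 1) = 2 * ((2 : ℤ) ^ v2 r) ^ 2 := by rw [pow_succ, pow_mul']; ring
      _ ≤ 2 * Nm r := by linarith [sq_two_pow_v2_le_Nm hr]
      _ < 3 * 2 ^ (n + 2) := hNm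
      _ < 2 ^ (n + 2 + 2) := by
        rw [pow_add _ (n + 2) 2]; linarith [pow_pos (two_pos : (0 : ℤ) < 2) (n + 2)]
  have := (pow_lt_pow_iff_right₀ one_lt_two).mp this
  omega

lemma eq_zero_or_abs_eq_of_dvd_of_sq_lt {J c : ℤ} (hJ : 0 < J) (hd : J ∣ c)
    (h : c ^ 2 < 3 * J ^ 2) : c = 0 ∨ |c| = J := by
  obtain ⟨d, rfl⟩ := hd
  have hd : |d| ≤ 1 := by
    by_contra! hd
    have : 4 ≤ d * d := by nlinarith [abs_mul_abs_self d]
    have : (J * d) ^ 2 = J ^ 2 * (d * d) := by ring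
    nlinarith [sq_nonneg J]
  rcases abs_le.mp hd with ⟨h1, h2⟩
  interval_cases d <;> simp [abs_of_pos hJ]

lemma mm_eq_zero_and_linf_eq_of_Nm_lt {r b : GaussianInt} (hr : r ≠ 0) (hb : b ≠ 0)
    (hNm : 2 * Nm r < 3 * 2 ^ (2 * v2 r + 1)) (hrb : 2 * linf (r * star b) ≤ Nm b)
    (hlinf : linf b < 2 ^ (v2 r + 1)) : mm r = 0 ∧ linf r = 2 ^ v2 r := by
  set J : ℤ := 2 ^ v2 r
  rw [pow_succ, pow_mul', ← mul_assoc] at hNm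
  rw [pow_succ] at hlinf
  obtain ⟨hre, him⟩ := (pow_dvd_re_and_im_iff_le_v2 hr _).mpr le_rfl
  have hJ : 0 < J := by positivity
  have hre' := eq_zero_or_abs_eq_of_dvd_of_sq_lt hJ hre (by unfold Nm at hNm; nlinarith)
  have him' := eq_zero_or_abs_eq_of_dvd_of_sq_lt hJ him (by unfold Nm at hNm; nlinarith)
  rcases hre' with h1 | h1 <;> rcases him' with h2 | h2
  · exact absurd (ne_zero_iff_re_ne_zero_or_im_ne_zero.mp hr) (by simp [h1, h2])
  · simp [mm, linf, h1, h2, hJ.le]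
  · simp [mm, linf, h1, h2, hJ.le]
  · exfalso
    have hdiag := linf_mul_star_of_abs_re_eq_abs_im (h1.trans h2.symm) b
    rw [show linf r = J by simp [linf, h1, h2]] at hdiag
    have := Nm_le_linf_mul_l1 b
    have := l1_pos hb
    nlinarith

lemma linf_le_linf_of_mm_eq_zero {r b : GaussianInt} (hb : b ≠ 0) (hr : mm r = 0)
    (hrb : 2 * linf (r * star b) ≤ Nm b) : linf r ≤ linf b := by
  rw [linf_mul_star_of_mm_eq_zero hr] at hrb
  have := Nm_le_linf_mul_l1 b
  have := l1_le_two_mul_linf b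
  have : 0 < linf b := by
    by_contra! h
    have := l1_pos hb
    nlinarith [Nm_pos hb]
  nlinarith

lemma v2_eq_of_dvd_of_not_dvd {z : GaussianInt} {j : ℕ}
    (h : (2 : ℤ) ^ j ∣ z.re ∧ (2 : ℤ) ^ j ∣ z.im)
    (h' : ¬ ((2 : ℤ) ^ (j + 1) ∣ z.re ∧ (2 : ℤ) ^ (j + 1) ∣ z.im)) : v2 z = j := by
  have hz : z ≠ 0 := by rintro rfl; exact h' ⟨dvd_zero _, dvd_zero _⟩
  rw [pow_dvd_re_and_im_iff_le_v2 hz] at h h'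
  omega

lemma v2_intCast_sub {c : GaussianInt} (hc : c ≠ 0) {k : ℕ} (hk : v2 c < k) :
    v2 (((2 ^ k : ℤ) : GaussianInt) - c) = v2 c := by
  obtain ⟨hre, him⟩ := (pow_dvd_re_and_im_iff_le_v2 hc (v2 c)).mpr le_rfl
  have hJ : (2 : ℤ) ^ (v2 c + 1) ∣ 2 ^ k := pow_dvd_pow 2 hk
  apply v2_eq_of_dvd_of_not_dvd <;>
    simp only [Zsqrtd.re_sub, Zsqrtd.im_sub, Zsqrtd.re_intCast, Zsqrtd.im_intCast, zero_sub,
      dvd_neg]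
  · exact ⟨dvd_sub ((pow_dvd_pow 2 (Nat.le_succ _)).trans hJ) hre, him⟩
  · rintro ⟨h1, h2⟩
    have := (pow_dvd_re_and_im_iff_le_v2 hc (v2 c + 1)).mp ⟨by simpa using dvd_sub hJ h1, h2⟩
    omega

lemma graves_bounds_of_phi_eq_odd {c : GaussianInt} {t : ℕ} (hc : |c.im| ≤ c.re)
    (hk : phi c = 2 * (t + v2 c) + 1) :
    (2 ^ v2 c * (3 * 2 ^ t - 2) < c.re ∧ c.re ≤ 2 ^ v2 c * (4 * 2 ^ t - 2) ∧
        c.re + |c.im| ≤ 2 ^ v2 c * (6 * 2 ^ t - 3)) ∨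
      c.re ≤ 2 ^ v2 c * (3 * 2 ^ t - 2) := by
  have hlinf : linf c = c.re := by
    rw [linf, abs_of_nonneg (by linarith [abs_nonneg c.im]), max_eq_left hc]
  have hle := linf_le_gravesIndex c
  rw [hlinf] at hle
  rcases phi_eq_gravesIndex_or c with ⟨h, hl1⟩ | h
  · have hm : gravesIndex c = 2 * t + 1 := by omega
    have hlow := lt_linf_of_lt_gravesIndex (show 2 * t < gravesIndex c by omega)
    rw [hm, w_odd] at hle
    rw [hm, show 2 * t + 1 + 1 = 2 * (t + 1) by ring, w_even, pow_succ, l1,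
      abs_of_nonneg (show 0 ≤ c.re by linarith [abs_nonneg c.im])] at hl1
    rw [w_even, hlinf] at hlow
    exact Or.inl ⟨hlow, hle, by linarith⟩
  · rw [show gravesIndex c = 2 * t by omega, w_even] at hle
    exact Or.inr hle

/-- With `B = 2 ^ v₂(c)` and `A = 2 ^ t`, these are Graves' bounds on `(X, Y) = (Re c, |Im c|)`
when `φ(c) = 2t + 2v₂(c) + 1`, giving the bounds of index `2t` for `(X - 2AB, Y)`. -/
lemma graves_bounds_sub {A B X Y : ℤ} (hB : 1 ≤ B) (hBX : B ∣ X) (hYX : Y ≤ X)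
    (hJX : 2 * A * B ≤ X)
    (h : (B * (3 * A - 2) < X ∧ X ≤ B * (4 * A - 2) ∧ X + Y ≤ B * (6 * A - 3)) ∨
      X ≤ B * (3 * A - 2)) :
    max (X - 2 * A * B) Y ≤ B * (3 * A - 2) ∧ X - 2 * A * B + Y ≤ B * (4 * A - 3) := by
  rcases h with ⟨hlow, hX, hXY⟩ | hX
  · obtain ⟨d, rfl⟩ := hBX
    have hd : 3 * A - 1 ≤ d := by
      by_contra! hd
      nlinarith
    have : B * (3 * A - 1) ≤ B * d := mul_le_mul_of_nonneg_left hd (by linarith)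
    exact ⟨max_le (by nlinarith) (by nlinarith), by nlinarith⟩
  · exact ⟨max_le (by nlinarith) (by nlinarith), by nlinarith⟩

lemma phi_intCast_sub_lt {c : GaussianInt} {k : ℕ} (hc : |c.im| ≤ c.re)
    (hk : phi c + 1 = 2 * k) (hJ : 2 ^ k ≤ c.re) :
    phi (((2 ^ k : ℤ) : GaussianInt) - c) < phi c := by
  set z := ((2 ^ k : ℤ) : GaussianInt) - c
  have hc0 : c ≠ 0 := by
    have : (0 : ℤ) < 2 ^ k := by positivity
    exact ne_zero_iff_re_ne_zero_or_im_ne_zero.mpr (Or.inl (by omega))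
  have hjk : v2 c < k := by rcases phi_eq_gravesIndex_or c with ⟨h, -⟩ | h <;> omega
  have hvz : v2 z = v2 c := v2_intCast_sub hc0 hjk
  obtain ⟨t, rfl⟩ : ∃ t, k = t + v2 c + 1 := ⟨k - v2 c - 1, by omega⟩
  have hJ' : (2 : ℤ) ^ (t + v2 c + 1) = 2 * 2 ^ t * 2 ^ v2 c := by rw [pow_succ, pow_add]; ring
  have hzre : |z.re| = c.re - 2 * 2 ^ t * 2 ^ v2 c := by
    simp only [z, Zsqrtd.re_sub, Zsqrtd.re_intCast]
    rw [abs_sub_comm, hJ', abs_of_nonneg (by linarith)]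
  have hzim : |z.im| = |c.im| := by
    simp only [z, Zsqrtd.im_sub, Zsqrtd.im_intCast, zero_sub, abs_neg]
  obtain ⟨hlinf, hl1⟩ := graves_bounds_sub (one_le_pow₀ one_le_two)
    ((pow_dvd_re_and_im_iff_le_v2 hc0 (v2 c)).mpr le_rfl).1 hc (hJ' ▸ hJ)
    (graves_bounds_of_phi_eq_odd hc (by omega))
  have := phi_le_of_le z (2 * t) (by rw [hvz, w_even, linf, hzre, hzim]; exact hlinf)
    (by rw [hvz, w_odd, l1, hzre, hzim]; exact hl1)
  omega

theorem stmt13_general (a b r : GaussianInt) (n : ℕ) (hb : b ≠ 0) (hr : r = gr a b)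
    (hr0 : r ≠ 0) (hn : phi b = n) (hn1 : 1 ≤ n)
    (hdvd : ¬((2 ^ (v2 r) : ℤ) ∣ w (n - 1))) :
    mm r = 0 ∧ phi (r - uz b * star (uz r) * b) < phi b := by
  subst hn
  have hgauss : 2 * linf (r * star b) ≤ Nm b := hr ▸ two_mul_linf_gr_mul_star_le a hb
  have hNm : 2 * Nm r < 3 * 2 ^ (phi b + 2) :=
    (two_mul_Nm_le_of_two_mul_linf_le hb hgauss).trans_lt (Nm_lt_of_phi b)
  have hk := succ_eq_two_mul_v2_of_two_mul_Nm_lt hr0 hNm hn1 hdvd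
  obtain ⟨hmm, hlinf⟩ := mm_eq_zero_and_linf_eq_of_Nm_lt hr0 hb (by rw [← hk]; exact hNm)
    hgauss (linf_lt_of_phi_lt (by omega))
  refine ⟨hmm, ?_⟩
  obtain ⟨hre, him⟩ := uz_mul_self_re_and_abs_im b
  rw [sub_uz_mul_eq_star_uz_mul hmm, phi_mul_of_isUnit (isUnit_uz r).star, hlinf,
    ← phi_mul_of_isUnit (isUnit_uz b) b]
  exact phi_intCast_sub_lt (by rw [hre, him]; exact min_le_max)
    (by rw [phi_mul_of_isUnit (isUnit_uz b) b, hk])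
    (by rw [hre, ← hlinf]; exact linf_le_linf_of_mm_eq_zero hb hmm hgauss)

theorem stmt13 (a b r : GaussianInt) (n : ℕ) (ha : a ≠ 0) (hb : b ≠ 0) (hr : r = gr a b)
    (hr0 : r ≠ 0) (hphi : phi r ≥ phi b) (hn : phi b = n) (hn1 : 1 ≤ n)
    (hdvd : ¬((2 ^ (v2 r) : ℤ) ∣ w (n - 1))) :
    mm r = 0 ∧ phi (r - uz b * star (uz r) * b) < phi b :=
  stmt13_general a b r n hb hr hr0 hn hn1 hdvd
end
end
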